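/- If a subset A ⊆ ∂F is a union of finitely many shadows, then only finitely many lines in L have exactly one of their two endpoints in A. -/

import Mathlib

open scoped BigOperators

namespace DecompPaper

variable (B : Type) [DecidableEq B]

/-- The set of letters `B ⊔ B⁻¹` carries the discrete topology. -/
instance : TopologicalSpace (B × Bool) := ⊥

/-- The Gromov boundary `∂F` of the free group on `B`: the space of infinite reduced
words, i.e. sequences of letters with no cancelling adjacent pair, topologized as a
subspace of the product of discrete spaces. -/
abbrev Boundary : Type :=
  {s : ℕ → B × Bool // ∀ k, s (k + 1) ≠ ((s k).1, !(s k).2)}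

/-- The prefix of length `m` of an infinite reduced word, as an element of the free group. -/
def prefixOf (ξ : Boundary B) (m : ℕ) : FreeGroup B :=
  FreeGroup.mk (List.ofFn fun i : Fin m => ξ.1 i)

/-- Adjacency in the Cayley graph `T` of the free group with respect to `B`. -/
def Adj (g h : FreeGroup B) : Prop :=
  ∃ x : B × Bool, h = g * FreeGroup.mk [x]

/-- A set of vertices of `T` is a subtree iff any two of its vertices are joined by a
path in the Cayley graph staying inside the set. -/
def IsSubtree (X : Set (FreeGroup B)) : Prop :=
  ∀ g ∈ X, ∀ h ∈ X, Relation.ReflTransGen (fun a b => Adj B a b ∧ b ∈ X) g h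

/-- `C` is a connected component of `T ∖ X`. -/
def IsComponentOf (X C : Set (FreeGroup B)) : Prop :=
  ∃ v, v ∉ X ∧
    C = {u | Relation.ReflTransGen (fun a b => Adj B a b ∧ a ∉ X ∧ b ∉ X) v u}

/-- `∂C`: the set of boundary points all of whose sufficiently long prefixes lie in `C`. -/
def boundaryOf (C : Set (FreeGroup B)) : Set (Boundary B) :=
  {ξ | ∃ m, ∀ k, m ≤ k → prefixOf B ξ k ∈ C}

/-- The sequence `a` of group elements converges to the boundary point `ξ`:
every prefix of `ξ` is eventually an initial segment of the reduced word of `a k`. -/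
def TendstoBoundary (a : ℕ → FreeGroup B) (ξ : Boundary B) : Prop :=
  ∀ m : ℕ, ∃ K, ∀ k, K ≤ k → (List.ofFn fun i : Fin m => ξ.1 i) <+: (a k).toWord

/-- `{ξ, η}` is a line of the line pattern generated by the words `w i`: for some
`g` and `i`, `ξ` and `η` are the limits of `g * (w i) ^ k` as `k → +∞` and `k → -∞`
(in one of the two orders). -/
def IsLine {r : ℕ} (w : Fin r → FreeGroup B) (ξ η : Boundary B) : Prop :=
  ∃ (g : FreeGroup B) (i : Fin r),
    (TendstoBoundary B (fun k => g * w i ^ k) ξ ∧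
       TendstoBoundary B (fun k => g * (w i)⁻¹ ^ k) η) ∨
    (TendstoBoundary B (fun k => g * w i ^ k) η ∧
       TendstoBoundary B (fun k => g * (w i)⁻¹ ^ k) ξ)

/-- Malnormality of the family of cyclic subgroups `⟨w i⟩`. -/
def Malnormal {r : ℕ} (w : Fin r → FreeGroup B) : Prop :=
  ∀ (g : FreeGroup B) (i j : Fin r),
    (∃ x : FreeGroup B, x ∈ Subgroup.zpowers (w i) ∧ x ≠ 1 ∧
        g * x * g⁻¹ ∈ Subgroup.zpowers (w j)) →
      i = j ∧ g ∈ Subgroup.zpowers (w i)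

/-- The decomposition space `D`: the quotient of `∂F` by the smallest equivalence
relation identifying the two endpoints of each line, with the quotient topology. -/
abbrev DSpace {r : ℕ} (w : Fin r → FreeGroup B) : Type :=
  Quot (IsLine B w)

/-- The quotient projection `q : ∂F → D`. -/
def qmap {r : ℕ} (w : Fin r → FreeGroup B) : Boundary B → DSpace B w :=
  Quot.mk _

/-- The geodesic of the line with endpoints `ξ` and `η`: all prefixes of `ξ` or of `η`
of length at least the length of their longest common initial segment. -/
def lineGeodesic (ξ η : Boundary B) : Set (FreeGroup B) :=
  {g | ∃ k : ℕ, (g = prefixOf B ξ k ∨ g = prefixOf B η k) ∧ ∃ i ≤ k, ξ.1 i ≠ η.1 i}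

/-- The line with endpoints `ξ, η` passes through the subtree `X`. -/
def PassesThrough (ξ η : Boundary B) (X : Set (FreeGroup B)) : Prop :=
  ∃ g ∈ X, g ∈ lineGeodesic B ξ η

/-- A function `σ : D → ℤ` is supported on the subtree `X` if `σ ∘ q` is constant on
`∂C` for every connected component `C` of `T ∖ X`. -/
def SupportedOn {r : ℕ} (w : Fin r → FreeGroup B) (σ : DSpace B w → ℤ)
    (X : Set (FreeGroup B)) : Prop :=
  ∀ C : Set (FreeGroup B), IsComponentOf B X C →
    ∀ ξ, ξ ∈ boundaryOf B C → ∀ η, η ∈ boundaryOf B C →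
      σ (qmap B w ξ) = σ (qmap B w η)

/-- Prepending a letter to an infinite reduced word, cancelling if necessary. -/
def consB (x : B × Bool) (ξ : Boundary B) : Boundary B :=
  if h : ξ.1 0 = (x.1, !x.2) then
    ⟨fun k => ξ.1 (k + 1), fun k => ξ.2 (k + 1)⟩
  else
    ⟨fun k => Nat.rec x (fun j _ => ξ.1 j) k, by
      intro k
      cases k with
      | zero => exact h
      | succ j => exact ξ.2 j⟩

/-- The action of the free group on its boundary: left multiplication followed by
reduction. -/
def actB (g : FreeGroup B) (ξ : Boundary B) : Boundary B :=
  g.toWord.foldr (consB B) ξ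

/-- The induced action of the free group on the decomposition space. -/
noncomputable def actD {r : ℕ} (w : Fin r → FreeGroup B) (g : FreeGroup B)
    (x : DSpace B w) : DSpace B w :=
  qmap B w (actB B g (Quot.out x))

/-- The map `p : (ℤ[F])^k → C(D, ℤ)` of right `ℤ[F]`-modules determined by generators
`σ j`, where an element of the free module `(ℤ[F])^k` is recorded as a finitely
supported function `(Fin k × F) →₀ ℤ` and `e_j · g` is sent to `σ j · g`. -/
noncomputable def pMap {r : ℕ} (w : Fin r → FreeGroup B) {k : ℕ}
    (σ : Fin k → DSpace B w → ℤ) (x : (Fin k × FreeGroup B) →₀ ℤ) :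
    DSpace B w → ℤ :=
  fun d => x.sum fun p n => n * σ p.1 (actD B w p.2 d)

/-- Right translation by `g` on the free module `(ℤ[F])^k`, sending `e_j · h` to
`e_j · (h * g)`. -/
noncomputable def fsTranslate {k : ℕ} (y : (Fin k × FreeGroup B) →₀ ℤ)
    (g : FreeGroup B) : (Fin k × FreeGroup B) →₀ ℤ :=
  Finsupp.mapDomain (fun p => (p.1, p.2 * g)) y

/-- The convex hull of a set of vertices of `T`: the smallest subtree containing it. -/
def hull (S : Set (FreeGroup B)) : Set (FreeGroup B) :=
  ⋂₀ {Y : Set (FreeGroup B) | IsSubtree B Y ∧ S ⊆ Y}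

/-- The support of an element of the free module `(ℤ[F])^k`, relative to supports
`X j` of the generators: the convex hull of the union of the sets `g⁻¹ • X j` over
the pairs `(j, g)` appearing with nonzero coefficient. -/
def fsSupport {k : ℕ} (X : Fin k → Set (FreeGroup B))
    (x : (Fin k × FreeGroup B) →₀ ℤ) : Set (FreeGroup B) :=
  hull B (⋃ p ∈ x.support, (fun v => p.2⁻¹ * v) '' X p.1)

/-- Antisymmetry of a `1`-cochain on oriented lines. -/
def Antisym {r : ℕ} (w : Fin r → FreeGroup B)
    (f : Boundary B → Boundary B → ℤ) : Prop :=
  ∀ ξ η, IsLine B w ξ η → f η ξ = -f ξ η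

/-- A `1`-cochain is supported on the subtree `X`: it vanishes on lines not passing
through `X`, and depends only on the pair of components of `T ∖ X` containing the two
endpoints. -/
def SupportedOn1 {r : ℕ} (w : Fin r → FreeGroup B)
    (f : Boundary B → Boundary B → ℤ) (X : Set (FreeGroup B)) : Prop :=
  (∀ ξ η, IsLine B w ξ η → ¬PassesThrough B ξ η X → f ξ η = 0) ∧
  (∀ C C' : Set (FreeGroup B), IsComponentOf B X C → IsComponentOf B X C' → C ≠ C' →
    ∀ ξ ξ' η η', IsLine B w ξ η → IsLine B w ξ' η' →
      ξ ∈ boundaryOf B C → ξ' ∈ boundaryOf B C →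
      η ∈ boundaryOf B C' → η' ∈ boundaryOf B C' →
      f ξ η = f ξ' η')

/-- Membership in `C¹`: an antisymmetric integer-valued function on oriented lines
supported on at least one finite nonempty subtree of `T`. -/
def MemC1 {r : ℕ} (w : Fin r → FreeGroup B)
    (f : Boundary B → Boundary B → ℤ) : Prop :=
  Antisym B w f ∧
    ∃ X : Set (FreeGroup B), X.Finite ∧ X.Nonempty ∧ IsSubtree B X ∧
      SupportedOn1 B w f X

/-- The ball of radius `R` about a set `Y` of vertices of `T` (word metric). -/
def ballAbout (Y : Set (FreeGroup B)) (R : ℕ) : Set (FreeGroup B) :=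
  {g | ∃ y ∈ Y, (y⁻¹ * g).toWord.length ≤ R}

/-- The map `p : (ℤ[F])^k → C¹` of right `ℤ[F]`-modules determined by generators
`f j`, sending `e_j · g` to `f j · g`. -/
noncomputable def pC1 {k : ℕ} (f : Fin k → Boundary B → Boundary B → ℤ)
    (x : (Fin k × FreeGroup B) →₀ ℤ) : Boundary B → Boundary B → ℤ :=
  fun ξ η => x.sum fun p n => n * f p.1 (actB B p.2 ξ) (actB B p.2 η)

/-- `σ : ∂F → ℤ` is constant on `∂C` for every connected component `C` of `T ∖ X`. -/
def ConstOnComponents (X : Set (FreeGroup B)) (σ : Boundary B → ℤ) : Prop :=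
  ∀ C : Set (FreeGroup B), IsComponentOf B X C →
    ∀ ξ, ξ ∈ boundaryOf B C → ∀ η, η ∈ boundaryOf B C → σ ξ = σ η

/-- The shadow `S(g) ⊆ ∂F` of a nontrivial group element `g`: the boundary points
having the reduced word of `g` as an initial segment. -/
def shadow (g : FreeGroup B) : Set (Boundary B) :=
  {ξ | prefixOf B ξ g.toWord.length = g}

end DecompPaper

open DecompPaper

/-!
Let `{ξ, η}` be the line `{g·w^{+∞}, g·w^{-∞}}` with `ξ ∈ S(h)` and `η ∉ S(h)`. Walking along
the axis `g·wⁿ` from `η` to `ξ`, the reduced words eventually stop and start having `h` as a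
prefix, so some step from `g·wⁿ` to `g·wⁿ⁺¹` passes through `h`. Hence the vertex `g·wⁿ`,
which determines the same line, has length at most `|h| + |w|`. There are finitely many such
vertices, finitely many `w_i` and shadows, and each pair `(g', w_i)` determines its line.
-/

theorem Int.exists_not_and_succ_of_le {P : ℤ → Prop} {a b : ℤ} (hab : a ≤ b) (ha : ¬P a)
    (hb : P b) : ∃ n, ¬P n ∧ P (n + 1) := by
  by_contra! hstep
  exact Int.leInduction (motive := fun n _ => ¬P n) ha (fun n _ => hstep n) b hab hb

theorem List.exists_maximal_common_prefix {α : Type*} :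
    ∀ X Y : List α, ∃ P X' Y', X = P ++ X' ∧ Y = P ++ Y' ∧
      ∀ a ∈ X'.head?, ∀ b ∈ Y'.head?, a ≠ b
  | [], Y => ⟨[], [], Y, rfl, rfl, by simp⟩
  | a :: X, [] => ⟨[], a :: X, [], rfl, rfl, by simp⟩
  | a :: X, b :: Y => by
    by_cases hab : a = b
    · obtain ⟨P, X', Y', rfl, rfl, hne⟩ := exists_maximal_common_prefix X Y
      exact ⟨a :: P, X', Y', rfl, by rw [hab]; rfl, hne⟩
    · exact ⟨[], a :: X, b :: Y, rfl, rfl, by simpa using hab⟩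

namespace FreeGroup

variable {α : Type*}

theorem IsReduced.invRev {L : List (α × Bool)} (h : IsReduced L) : IsReduced (invRev L) := by
  rw [FreeGroup.invRev, IsReduced, List.isChain_reverse, List.isChain_map]
  exact h.imp fun a b hab hba => by simpa using (hab (by simpa using hba.symm)).symm

variable [DecidableEq α]

/-- `P` is the longest common prefix of the reduced words of `x` and `y`, so nothing cancels
in `invRev X ++ Y`. -/
theorem norm_inv_mul_of_toWord_eq_append {x y : FreeGroup α} {P X Y : List (α × Bool)}
    (hx : x.toWord = P ++ X) (hy : y.toWord = P ++ Y)
    (hne : ∀ a ∈ X.head?, ∀ b ∈ Y.head?, a ≠ b) :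
    norm (x⁻¹ * y) = X.length + Y.length := by
  have hmul : x⁻¹ * y = mk (invRev X ++ Y) := by
    rw [← mk_toWord (x := x), ← mk_toWord (x := y), hx, hy, ← mul_mk, ← mul_mk, ← mul_mk,
      ← inv_mk]
    group
  have hred : IsReduced (invRev X ++ Y) := by
    refine List.isChain_append.2 ⟨?_, ?_, ?_⟩
    · exact (isReduced_toWord.infix (hx ▸ (List.suffix_append P X).isInfix)).invRev
    · exact isReduced_toWord.infix (hy ▸ (List.suffix_append P Y).isInfix)
    · simp only [invRev, List.getLast?_reverse, List.head?_map, Option.mem_map]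
      rintro _ ⟨⟨a₁, a₂⟩, ha, rfl⟩ ⟨b₁, b₂⟩ hb (rfl : a₁ = b₁)
      have := hne _ ha _ hb
      cases a₂ <;> cases b₂ <;> simp_all
  rw [norm, hmul, toWord_mk, hred.reduce_eq, List.length_append, invRev_length]

/-- In the Cayley tree, `h` lies on the geodesic from `x` to `y`. -/
theorem norm_inv_mul_le_of_isPrefix {x y h : FreeGroup α} (hy : h.toWord <+: y.toWord)
    (hx : ¬h.toWord <+: x.toWord) : norm (x⁻¹ * h) ≤ norm (x⁻¹ * y) := by
  obtain ⟨P, X, Y, hxP, hyP, hne⟩ := List.exists_maximal_common_prefix x.toWord y.toWord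
  obtain hhP | ⟨H, hhP⟩ := List.prefix_or_prefix_of_prefix hy (hyP ▸ List.prefix_append P Y)
  · exact absurd (hhP.trans (hxP ▸ List.prefix_append P X)) hx
  obtain ⟨T, rfl⟩ : H <+: Y := by rwa [← List.prefix_append_right_inj P, hhP, ← hyP]
  have hneH : ∀ a ∈ X.head?, ∀ b ∈ H.head?, a ≠ b := fun a ha b hb =>
    hne a ha b (by rw [Option.mem_def] at hb; simp [hb])
  rw [norm_inv_mul_of_toWord_eq_append hxP hhP.symm hneH,
    norm_inv_mul_of_toWord_eq_append hxP hyP hne, List.length_append]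
  omega

theorem finite_setOf_norm_le [Finite α] (R : ℕ) : {x : FreeGroup α | norm x ≤ R}.Finite :=
  (List.finite_length_le _ R).preimage toWord_injective.injOn

end FreeGroup

namespace DecompPaper

open Filter

variable {B : Type}

theorem isReduced_ofFn (ξ : Boundary B) (m : ℕ) :
    FreeGroup.IsReduced (List.ofFn fun i : Fin m => ξ.1 i) := by
  rw [FreeGroup.IsReduced, List.isChain_iff_getElem]
  intro i _ h₁
  simp only [List.getElem_ofFn] at h₁ ⊢
  by_contra h₂
  exact ξ.2 i (Prod.ext h₁.symm (Bool.eq_not_of_ne (Ne.symm h₂)))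

variable [DecidableEq B]

theorem toWord_prefixOf (ξ : Boundary B) (m : ℕ) :
    (prefixOf B ξ m).toWord = List.ofFn fun i : Fin m => ξ.1 i := by
  rw [prefixOf, FreeGroup.toWord_mk, (isReduced_ofFn ξ m).reduce_eq]

theorem mem_shadow_iff {ξ : Boundary B} {h : FreeGroup B} :
    ξ ∈ shadow B h ↔ (List.ofFn fun i : Fin h.toWord.length => ξ.1 i) = h.toWord := by
  rw [shadow, Set.mem_ofPred_eq, ← FreeGroup.toWord_inj, toWord_prefixOf]

section TendstoBoundary

variable {a : ℕ → FreeGroup B} {ξ : Boundary B}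

theorem TendstoBoundary.eventually_eq_take (ha : TendstoBoundary B a ξ) (m : ℕ) :
    ∀ᶠ k in atTop, (List.ofFn fun i : Fin m => ξ.1 i) = (a k).toWord.take m := by
  obtain ⟨K, hK⟩ := ha m
  filter_upwards [eventually_ge_atTop K] with k hk
  simpa using List.prefix_iff_eq_take.1 (hK k hk)

theorem TendstoBoundary.unique {ξ' : Boundary B} (ha : TendstoBoundary B a ξ)
    (ha' : TendstoBoundary B a ξ') : ξ = ξ' := by
  refine Subtype.ext (funext fun j => ?_)
  obtain ⟨k, hk, hk'⟩ := ((ha.eventually_eq_take (j + 1)).and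
    (ha'.eventually_eq_take (j + 1))).exists
  exact congrFun (List.ofFn_inj.1 (hk.trans hk'.symm)) ⟨j, j.lt_succ_self⟩

theorem TendstoBoundary.eventually_isPrefix_iff_mem_shadow (ha : TendstoBoundary B a ξ)
    (h : FreeGroup B) :
    ∀ᶠ k in atTop, (h.toWord <+: (a k).toWord ↔ ξ ∈ shadow B h) := by
  filter_upwards [ha.eventually_eq_take h.toWord.length] with k hk
  rw [mem_shadow_iff, hk, List.prefix_iff_eq_take, eq_comm]

theorem TendstoBoundary.comp_of_eventually_eq (ha : TendstoBoundary B a ξ) {f : ℕ → ℕ}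
    (hf : Tendsto f atTop atTop) {b : ℕ → FreeGroup B} (hb : ∀ᶠ k in atTop, b k = a (f k)) :
    TendstoBoundary B b ξ := by
  intro m
  obtain ⟨K, hK⟩ := ha m
  obtain ⟨K', hK'⟩ := eventually_atTop.1 (hb.and (hf.eventually_ge_atTop K))
  exact ⟨K', fun k hk => (hK' k hk).1 ▸ hK _ (hK' k hk).2⟩

theorem TendstoBoundary.mul_zpow {g u : FreeGroup B}
    (ha : TendstoBoundary B (fun k => g * u ^ k) ξ) (n : ℤ) :
    TendstoBoundary B (fun k => g * u ^ n * u ^ k) ξ := by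
  refine ha.comp_of_eventually_eq (f := fun k => (n + k).toNat)
    (tendsto_atTop_atTop.2 fun K => ⟨K + n.natAbs, fun k hk => by omega⟩) ?_
  filter_upwards [eventually_ge_atTop n.natAbs] with k hk
  rw [mul_assoc, ← zpow_natCast u k, ← zpow_add, ← zpow_natCast, Int.toNat_of_nonneg (by omega)]

end TendstoBoundary

def axisEnds (g u : FreeGroup B) : Set (Boundary B × Boundary B) :=
  {p | TendstoBoundary B (fun k => g * u ^ k) p.1 ∧ TendstoBoundary B (fun k => g * u⁻¹ ^ k) p.2}

theorem axisEnds_subsingleton (g u : FreeGroup B) : (axisEnds g u).Subsingleton :=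
  fun _ hp _ hq => Prod.ext (hp.1.unique hq.1) (hp.2.unique hq.2)

theorem axisEnds_inv {g u : FreeGroup B} {ξ η : Boundary B} :
    (ξ, η) ∈ axisEnds g u⁻¹ ↔ (η, ξ) ∈ axisEnds g u := by
  simp only [axisEnds, Set.mem_ofPred_eq, inv_inv, and_comm]

theorem IsLine.exists_mem_axisEnds {r : ℕ} {w : Fin r → FreeGroup B} {ξ η : Boundary B}
    (hl : IsLine B w ξ η) : ∃ g i, ∃ u ∈ ({w i, (w i)⁻¹} : Set (FreeGroup B)),
      (ξ, η) ∈ axisEnds g u := by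
  obtain ⟨g, i, hl | hl⟩ := hl
  · exact ⟨g, i, w i, Or.inl rfl, hl⟩
  · exact ⟨g, i, (w i)⁻¹, Or.inr rfl, axisEnds_inv.2 hl⟩

theorem exists_norm_le_mem_axisEnds {g u h : FreeGroup B} {ξ η : Boundary B}
    (hp : (ξ, η) ∈ axisEnds g u) (hξ : ξ ∈ shadow B h) (hη : η ∉ shadow B h) :
    ∃ g', g'.norm ≤ h.norm + u.norm ∧ (ξ, η) ∈ axisEnds g' u := by
  obtain ⟨K, hK⟩ := ((hp.1.eventually_isPrefix_iff_mem_shadow h).and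
    (hp.2.eventually_isPrefix_iff_mem_shadow h)).exists_forall_of_atTop
  -- `g * u ^ n` lies outside `S(h)` at `n = -K` and inside at `n = K`; at a crossing,
  -- `h` lies on the geodesic from `g * u ^ n` to `g * u ^ (n + 1)`.
  obtain ⟨n, hn, hn₁⟩ := Int.exists_not_and_succ_of_le
    (P := fun n : ℤ => h.toWord <+: (g * u ^ n).toWord) (neg_le_self K.cast_nonneg)
    (by simpa [zpow_neg, ← inv_pow, hη] using (hK K le_rfl).2)
    (by simpa [hξ] using (hK K le_rfl).1)
  have hstep : (g * u ^ n)⁻¹ * (g * u ^ (n + 1)) = u := by group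
  refine ⟨g * u ^ n, ?_, hp.1.mul_zpow n, ?_⟩
  · calc (g * u ^ n).norm = (h * (h⁻¹ * (g * u ^ n))).norm := by rw [mul_inv_cancel_left]
      _ ≤ h.norm + ((g * u ^ n)⁻¹ * h).norm := by
        simpa only [← FreeGroup.norm_inv_eq (x := h⁻¹ * _), mul_inv_rev, inv_inv]
          using FreeGroup.norm_mul_le h (h⁻¹ * (g * u ^ n))
      _ ≤ h.norm + u.norm := by
        grw [FreeGroup.norm_inv_mul_le_of_isPrefix hn₁ hn, hstep]
  · simpa [inv_zpow', zpow_neg] using hp.2.mul_zpow (-n)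

end DecompPaper

theorem finitely_many_lines_with_one_end_in_finite_union_of_shadows_general
    (B : Type) [Fintype B] [DecidableEq B]
    (r : ℕ) (w : Fin r → FreeGroup B)
    (A : Set (Boundary B)) (G : Finset (FreeGroup B))
    (hA : A = ⋃ g ∈ G, shadow B g) :
    Set.Finite {p : Boundary B × Boundary B |
      IsLine B w p.1 p.2 ∧ p.1 ∈ A ∧ p.2 ∉ A} := by
  refine Set.Finite.subset (G.finite_toSet.biUnion fun h _ => Set.finite_iUnion fun i =>
    (Set.toFinite {w i, (w i)⁻¹}).biUnion fun u _ =>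
      (FreeGroup.finite_setOf_norm_le (h.norm + u.norm)).biUnion fun g _ =>
        (axisEnds_subsingleton g u).finite) ?_
  rintro ⟨ξ, η⟩ ⟨hl, hξ, hη⟩
  subst hA
  obtain ⟨h, hG, hξh⟩ := Set.mem_iUnion₂.1 hξ
  obtain ⟨g, i, u, hu, hp⟩ := hl.exists_mem_axisEnds
  obtain ⟨g', hg', hp'⟩ :=
    exists_norm_le_mem_axisEnds hp hξh fun hηh => hη (Set.mem_biUnion hG hηh)
  simp only [Set.mem_iUnion]
  exact ⟨h, hG, i, u, hu, g', hg', hp'⟩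

/-- if `A ⊆ ∂F` is a union of finitely many shadows, then only
finitely many lines of the line pattern have exactly one endpoint in `A`. -/
theorem finitely_many_lines_with_one_end_in_finite_union_of_shadows
    (B : Type) [Fintype B] [DecidableEq B] (hB : 2 ≤ Fintype.card B)
    (r : ℕ) (w : Fin r → FreeGroup B) (hw : ∀ i, w i ≠ 1) (hmal : Malnormal B w)
    (A : Set (Boundary B)) (G : Finset (FreeGroup B)) (hG : ∀ g ∈ G, g ≠ 1)
    (hA : A = ⋃ g ∈ G, shadow B g) :
    Set.Finite {p : Boundary B × Boundary B |
      IsLine B w p.1 p.2 ∧ p.1 ∈ A ∧ p.2 ∉ A} :=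
  finitely_many_lines_with_one_end_in_finite_union_of_shadows_general B r w A G hA
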